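/- arXiv:2303.11446 — 7 statements merged into one kernel-verified Lean document; each statement's English description precedes it below -/
import Mathlib

section
/- The map ρ is surjective: for every (w₁,w₂) ∈ S¹ × S¹ there exist real numbers α, β, γ with either (α+β+γ = π and 0 ≤ α,β,γ ≤ π) or (α+β+γ = −π and −π ≤ α,β,γ ≤ 0) such that e^{2iβ} = w₁ and e^{−2iα} = w₂. -/
open Real

theorem rho_surjective (w₁ w₂ : Circle) :
    ∃ α β γ : ℝ,
      ((α + β + γ = π ∧ 0 ≤ α ∧ α ≤ π ∧ 0 ≤ β ∧ β ≤ π ∧ 0 ≤ γ ∧ γ ≤ π) ∨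
       (α + β + γ = -π ∧ -π ≤ α ∧ α ≤ 0 ∧ -π ≤ β ∧ β ≤ 0 ∧ -π ≤ γ ∧ γ ≤ 0)) ∧
      Circle.exp (2 * β) = w₁ ∧ Circle.exp (-(2 * α)) = w₂ := by
  have hpi := Real.pi_pos
  set a := Complex.arg (w₁ : ℂ) with ha
  set b := Complex.arg (w₂ : ℂ) with hb
  have ha1 : -π < a := Complex.neg_pi_lt_arg _
  have ha2 : a ≤ π := Complex.arg_le_pi _
  have hb1 : -π < b := Complex.neg_pi_lt_arg _
  have hb2 : b ≤ π := Complex.arg_le_pi _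
  have hea : Circle.exp a = w₁ := Circle.exp_arg w₁
  have heb : Circle.exp b = w₂ := Circle.exp_arg w₂
  -- β ∈ [0, π) with exp (2β) = w₁
  set β : ℝ := if a / 2 < 0 then a / 2 + π else a / 2 with hβ
  have hβ0 : 0 ≤ β := by rw [hβ]; split <;> [linarith; linarith [not_lt.mp (by assumption)]]
  have hβπ : β ≤ π := by rw [hβ]; split <;> linarith
  have hβe : Circle.exp (2 * β) = w₁ := by
    rw [hβ]; split
    · rw [show 2 * (a / 2 + π) = a + 2 * π by ring, Circle.exp_add_two_pi]
      simpa using hea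
    · rw [show 2 * (a / 2) = a by ring]; exact hea
  -- α ∈ [0, π) with exp (-(2α)) = w₂
  set α : ℝ := if 0 < b / 2 then π - b / 2 else -(b / 2) with hα
  have hα0 : 0 ≤ α := by rw [hα]; split <;> [linarith; linarith [not_lt.mp (by assumption)]]
  have hαπ : α ≤ π := by rw [hα]; split <;> linarith
  have hαe : Circle.exp (-(2 * α)) = w₂ := by
    rw [hα]; split
    · rw [show -(2 * (π - b / 2)) = b - 2 * π by ring, Circle.exp_sub_two_pi]
      simpa using heb
    · rw [show -(2 * -(b / 2)) = b by ring]; exact heb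
  by_cases hc : α + β ≤ π
  · exact ⟨α, β, π - α - β, Or.inl ⟨by ring, hα0, hαπ, hβ0, hβπ, by linarith, by linarith⟩,
      hβe, hαe⟩
  · refine ⟨α - π, β - π, π - α - β, Or.inr ⟨by ring, by linarith, by linarith, by linarith,
      by linarith, by linarith, by linarith⟩, ?_, ?_⟩
    · rw [show 2 * (β - π) = 2 * β - 2 * π by ring, Circle.exp_sub_two_pi]; exact hβe
    · rw [show -(2 * (α - π)) = -(2 * α) + 2 * π by ring, Circle.exp_add_two_pi]; exact hαe
end

section
/- The map ρ preserves orientation: if α, β, γ ∈ ℝ satisfy α,β,γ > 0 and α+β+γ = π, then the inscribed triple A = e^{2iβ}, B = e^{−2iα}, C = 1 on the unit circle is positively (counterclockwise) oriented, i.e. Im( conj(B − A) · (C − A) ) > 0; and if α,β,γ < 0 with α+β+γ = −π, then the triple is negatively oriented, i.e. Im( conj(B − A) · (C − A) ) < 0. -/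
open Real Complex

lemma rho_im_eq (a b : ℝ) :
    ((starRingEnd ℂ) (Complex.exp ((-(2 * a) : ℝ) * Complex.I) -
        Complex.exp (((2 * b) : ℝ) * Complex.I)) *
      ((1 : ℂ) - Complex.exp (((2 * b) : ℝ) * Complex.I))).im =
    4 * Real.sin a * Real.sin b * Real.sin (a + b) := by
  simp only [map_sub, Complex.sub_im, Complex.sub_re, Complex.mul_im, Complex.mul_re,
    Complex.one_re, Complex.one_im, Complex.conj_re, Complex.conj_im,
    Complex.exp_ofReal_mul_I_re, Complex.exp_ofReal_mul_I_im,
    Real.cos_neg, Real.sin_neg]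
  rw [Real.sin_two_mul, Real.cos_two_mul, Real.sin_two_mul, Real.cos_two_mul,
    Real.sin_add]
  linear_combination (-4 * Real.sin b * Real.cos b) * Real.sin_sq_add_cos_sq a +
    (-4 * Real.sin a * Real.cos a) * Real.sin_sq_add_cos_sq b

theorem rho_preserves_orientation (α β γ : ℝ) :
    (0 < α → 0 < β → 0 < γ → α + β + γ = π →
      0 < ((starRingEnd ℂ) (Complex.exp ((-(2 * α) : ℝ) * Complex.I) -
              Complex.exp (((2 * β) : ℝ) * Complex.I)) *
            ((1 : ℂ) - Complex.exp (((2 * β) : ℝ) * Complex.I))).im) ∧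
    (α < 0 → β < 0 → γ < 0 → α + β + γ = -π →
      ((starRingEnd ℂ) (Complex.exp ((-(2 * α) : ℝ) * Complex.I) -
              Complex.exp (((2 * β) : ℝ) * Complex.I)) *
            ((1 : ℂ) - Complex.exp (((2 * β) : ℝ) * Complex.I))).im < 0) := by
  rw [rho_im_eq]
  constructor
  · intro hα hβ hγ hsum
    have h1 : Real.sin α > 0 := Real.sin_pos_of_pos_of_lt_pi hα (by linarith)
    have h2 : Real.sin β > 0 := Real.sin_pos_of_pos_of_lt_pi hβ (by linarith)
    have h3 : Real.sin (α + β) > 0 :=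
      Real.sin_pos_of_pos_of_lt_pi (by linarith) (by linarith)
    positivity
  · intro hα hβ hγ hsum
    have hπ := Real.pi_pos
    have h1 : Real.sin α < 0 := by
      have := Real.sin_pos_of_pos_of_lt_pi (x := -α) (by linarith) (by linarith)
      rw [Real.sin_neg] at this; linarith
    have h2 : Real.sin β < 0 := by
      have := Real.sin_pos_of_pos_of_lt_pi (x := -β) (by linarith) (by linarith)
      rw [Real.sin_neg] at this; linarith
    have h3 : Real.sin (α + β) < 0 := by
      have := Real.sin_pos_of_pos_of_lt_pi (x := -(α+β)) (by linarith) (by linarith)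
      rw [Real.sin_neg] at this; linarith
    nlinarith [mul_neg_of_pos_of_neg (mul_pos_of_neg_of_neg h1 h2) h3]
end

section
/- A point of T₊ ⊔ T₋ represents a degenerate triangle exactly when its image under ρ is a degenerate triple: for (α,β,γ) ∈ ℝ³ with either (α+β+γ = π and 0 ≤ α,β,γ ≤ π) or (α+β+γ = −π and −π ≤ α,β,γ ≤ 0), one has α·β·γ = 0 if and only if e^{2iβ} = 1 or e^{−2iα} = 1 or e^{2iβ} = e^{−2iα}. -/
open Real

lemma aux_two_mul_eq (x : ℝ) (hx : |x| ≤ π) :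
    (∃ n : ℤ, 2 * x = n * (2 * π)) ↔ x = 0 ∨ x = π ∨ x = -π := by
  have hπ := Real.pi_pos
  constructor
  · rintro ⟨n, hn⟩
    have hx' : x = n * π := by linarith
    have habs : |(n : ℝ)| ≤ 1 := by
      rw [hx', abs_mul, abs_of_pos hπ] at hx
      exact le_of_mul_le_mul_right (by linarith) hπ
    have h1 : -1 ≤ n ∧ n ≤ 1 := by
      have := abs_le.mp habs
      exact ⟨by exact_mod_cast this.1, by exact_mod_cast this.2⟩
    obtain ⟨hl, hr⟩ := h1
    interval_cases n <;> simp_all <;> linarith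
  · rintro (h | h | h)
    · exact ⟨0, by simp [h]⟩
    · exact ⟨1, by rw [h]; ring⟩
    · exact ⟨-1, by rw [h]; push_cast; ring⟩

theorem degenerate_iff_rho_degenerate (α β γ : ℝ)
    (h : (α + β + γ = π ∧ 0 ≤ α ∧ α ≤ π ∧ 0 ≤ β ∧ β ≤ π ∧ 0 ≤ γ ∧ γ ≤ π) ∨
         (α + β + γ = -π ∧ -π ≤ α ∧ α ≤ 0 ∧ -π ≤ β ∧ β ≤ 0 ∧ -π ≤ γ ∧ γ ≤ 0)) :
    α * β * γ = 0 ↔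
      Circle.exp (2 * β) = 1 ∨ Circle.exp (-(2 * α)) = 1 ∨
        Circle.exp (2 * β) = Circle.exp (-(2 * α)) := by
  have hπ := Real.pi_pos
  have hβabs : |β| ≤ π := by rcases h with ⟨_, h⟩ | ⟨_, h⟩ <;> rw [abs_le] <;>
    constructor <;> linarith [h.1, h.2.1, h.2.2.1, h.2.2.2.1, h.2.2.2.2.1, h.2.2.2.2.2]
  have hαabs : |α| ≤ π := by rcases h with ⟨_, h⟩ | ⟨_, h⟩ <;> rw [abs_le] <;>
    constructor <;> linarith [h.1, h.2.1, h.2.2.1, h.2.2.2.1, h.2.2.2.2.1, h.2.2.2.2.2]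
  have hsabs : |α + β| ≤ π := by rcases h with ⟨hs, h⟩ | ⟨hs, h⟩ <;> rw [abs_le] <;>
    constructor <;> linarith [h.1, h.2.1, h.2.2.1, h.2.2.2.1, h.2.2.2.2.1, h.2.2.2.2.2]
  have e1 : Circle.exp (2 * β) = 1 ↔ (β = 0 ∨ β = π ∨ β = -π) := by
    rw [Circle.exp_eq_one, aux_two_mul_eq β hβabs]
  have e2 : Circle.exp (-(2 * α)) = 1 ↔ (α = 0 ∨ α = π ∨ α = -π) := by
    rw [Circle.exp_neg, inv_eq_one, Circle.exp_eq_one, aux_two_mul_eq α hαabs]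
  have e3 : Circle.exp (2 * β) = Circle.exp (-(2 * α)) ↔
      (α + β = 0 ∨ α + β = π ∨ α + β = -π) := by
    rw [← aux_two_mul_eq (α + β) hsabs, ← Circle.exp_eq_one]
    constructor
    · intro hh
      have : Circle.exp (2 * β) * Circle.exp (2 * α) =
          Circle.exp (-(2 * α)) * Circle.exp (2 * α) := by rw [hh]
      rw [← Circle.exp_add, ← Circle.exp_add] at this
      simpa [show 2 * β + 2 * α = 2 * (α + β) by ring] using this
    · intro hh
      have : Circle.exp (2 * (α + β)) * Circle.exp (-(2 * α)) =
          1 * Circle.exp (-(2 * α)) := by rw [hh]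
      rw [← Circle.exp_add, one_mul] at this
      simpa [show 2 * (α + β) + -(2 * α) = 2 * β by ring] using this
  rw [e1, e2, e3, mul_eq_zero, mul_eq_zero]
  rcases h with ⟨hs, h0, h1, h2, h3, h4, h5⟩ | ⟨hs, h0, h1, h2, h3, h4, h5⟩ <;>
    constructor
  · rintro ((ha | hb) | hc)
    · exact Or.inr (Or.inl (Or.inl ha))
    · exact Or.inl (Or.inl hb)
    · right; right; right; left; linarith
  · rintro ((hb | hb | hb) | (ha | ha | ha) | (hc | hc | hc)) <;>
      first
      | (left; left; linarith)
      | (left; right; linarith)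
      | (right; linarith)
  · rintro ((ha | hb) | hc)
    · exact Or.inr (Or.inl (Or.inl ha))
    · exact Or.inl (Or.inl hb)
    · right; right; right; right; linarith
  · rintro ((hb | hb | hb) | (ha | ha | ha) | (hc | hc | hc)) <;>
      first
      | (left; left; linarith)
      | (left; right; linarith)
      | (right; linarith)
end

section
/- The preimage under ρ of the identity (1,1) ∈ S¹ × S¹ consists exactly of the six vertex points of T₊ ⊔ T₋: {(α,β,γ) ∈ T₊ ∪ T₋ : e^{2iβ} = 1 and e^{−2iα} = 1} = {(π,0,0), (0,π,0), (0,0,π), (−π,0,0), (0,−π,0), (0,0,−π)}. -/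
open Real

/-- The triangle of triangles. -/
def Tplus : Set (ℝ × ℝ × ℝ) :=
  {p | p.1 + p.2.1 + p.2.2 = π ∧
    0 ≤ p.1 ∧ p.1 ≤ π ∧ 0 ≤ p.2.1 ∧ p.2.1 ≤ π ∧ 0 ≤ p.2.2 ∧ p.2.2 ≤ π}

/-- The shadow triangle of triangles. -/
def Tminus : Set (ℝ × ℝ × ℝ) :=
  {p | p.1 + p.2.1 + p.2.2 = -π ∧
    -π ≤ p.1 ∧ p.1 ≤ 0 ∧ -π ≤ p.2.1 ∧ p.2.1 ≤ 0 ∧ -π ≤ p.2.2 ∧ p.2.2 ≤ 0}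

lemma aux_pi {x : ℝ} (h1 : -π ≤ x) (h2 : x ≤ π) (h : ∃ n : ℤ, x = n * π) :
    x = -π ∨ x = 0 ∨ x = π := by
  obtain ⟨n, rfl⟩ := h
  have hpi := Real.pi_pos
  have hn1 : (-1 : ℝ) ≤ n := by nlinarith
  have hn2 : (n : ℝ) ≤ 1 := by nlinarith
  have hn1' : (-1 : ℤ) ≤ n := by exact_mod_cast hn1
  have hn2' : n ≤ (1 : ℤ) := by exact_mod_cast hn2
  interval_cases n <;> norm_num

lemma e_zero : ∃ n : ℤ, -(2 * (0:ℝ)) = n * (2 * π) := ⟨0, by norm_num⟩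

lemma e_zero' : ∃ n : ℤ, 2 * (0:ℝ) = n * (2 * π) := ⟨0, by norm_num⟩

lemma e_negpi : ∃ n : ℤ, -(2 * π) = (n : ℝ) * (2 * π) := ⟨-1, by push_cast; ring⟩

lemma e_pospi : ∃ n : ℤ, (2 * π) = (n : ℝ) * (2 * π) := ⟨1, by push_cast; ring⟩

lemma e_negpi' : ∃ n : ℤ, -(2 * -π) = (n : ℝ) * (2 * π) := ⟨1, by push_cast; ring⟩

lemma e_pospi' : ∃ n : ℤ, (2 * -π) = (n : ℝ) * (2 * π) := ⟨-1, by push_cast; ring⟩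

theorem rho_preimage_of_identity :
    {p : ℝ × ℝ × ℝ | (p ∈ Tplus ∪ Tminus) ∧
        Circle.exp (2 * p.2.1) = 1 ∧ Circle.exp (-(2 * p.1)) = 1} =
      {(π, 0, 0), (0, π, 0), (0, 0, π), (-π, 0, 0), (0, -π, 0), (0, 0, -π)} := by
  have hpi := Real.pi_pos
  ext ⟨α, β, γ⟩
  simp only [Set.mem_setOf_eq, Set.mem_union, Set.mem_insert_iff, Set.mem_singleton_iff,
    Prod.mk.injEq, Tplus, Tminus, Circle.exp_eq_one]
  constructor
  · rintro ⟨hmem, ⟨n, hn⟩, ⟨m, hm⟩⟩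
    have hβ : ∃ k : ℤ, β = k * π := ⟨n, by linarith⟩
    have hα : ∃ k : ℤ, α = k * π := ⟨-m, by push_cast; linarith⟩
    have key : (α = -π ∨ α = 0 ∨ α = π) ∧ (β = -π ∨ β = 0 ∨ β = π) ∧
        (α + β + γ = π ∧ 0 ≤ α ∧ 0 ≤ β ∧ 0 ≤ γ ∨
         α + β + γ = -π ∧ α ≤ 0 ∧ β ≤ 0 ∧ γ ≤ 0) := by
      rcases hmem with ⟨hsum, h1, h2, h3, h4, h5, h6⟩ |
        ⟨hsum, h1, h2, h3, h4, h5, h6⟩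
      · exact ⟨aux_pi (by linarith) h2 hα, aux_pi (by linarith) h4 hβ,
          Or.inl ⟨hsum, h1, h3, h5⟩⟩
      · exact ⟨aux_pi h1 (by linarith) hα, aux_pi h3 (by linarith) hβ,
          Or.inr ⟨hsum, h2, h4, h6⟩⟩
    obtain ⟨hα', hβ', hc⟩ := key
    rcases hα' with rfl | rfl | rfl <;> rcases hβ' with rfl | rfl | rfl <;>
      rcases hc with ⟨hsum, h1, h2, h3⟩ | ⟨hsum, h1, h2, h3⟩ <;>
      first
        | (exfalso; linarith)
        | (exact Or.inl ⟨by linarith, by linarith, by linarith⟩)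
        | (exact Or.inr (Or.inl ⟨by linarith, by linarith, by linarith⟩))
        | (exact Or.inr (Or.inr (Or.inl ⟨by linarith, by linarith, by linarith⟩)))
        | (exact Or.inr (Or.inr (Or.inr (Or.inl ⟨by linarith, by linarith, by linarith⟩))))
        | (exact Or.inr (Or.inr (Or.inr (Or.inr (Or.inl ⟨by linarith, by linarith, by linarith⟩)))))
        | (exact Or.inr (Or.inr (Or.inr (Or.inr (Or.inr ⟨by linarith, by linarith, by linarith⟩)))))
  · rintro (⟨rfl, rfl, rfl⟩ | ⟨rfl, rfl, rfl⟩ | ⟨rfl, rfl, rfl⟩ |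
      ⟨rfl, rfl, rfl⟩ | ⟨rfl, rfl, rfl⟩ | ⟨rfl, rfl, rfl⟩)
    · exact ⟨Or.inl (by refine ⟨by ring, ?_, ?_, ?_, ?_, ?_, ?_⟩ <;> linarith), e_zero', e_negpi⟩
    · exact ⟨Or.inl (by refine ⟨by ring, ?_, ?_, ?_, ?_, ?_, ?_⟩ <;> linarith), e_pospi, e_zero⟩
    · exact ⟨Or.inl (by refine ⟨by ring, ?_, ?_, ?_, ?_, ?_, ?_⟩ <;> linarith), e_zero', e_zero⟩
    · exact ⟨Or.inr (by refine ⟨by ring, ?_, ?_, ?_, ?_, ?_, ?_⟩ <;> linarith), e_zero', e_negpi'⟩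
    · exact ⟨Or.inr (by refine ⟨by ring, ?_, ?_, ?_, ?_, ?_, ?_⟩ <;> linarith), e_pospi', e_zero⟩
    · exact ⟨Or.inr (by refine ⟨by ring, ?_, ?_, ?_, ?_, ?_, ?_⟩ <;> linarith), e_zero', e_zero⟩
end

section
/- For every β₀ ∈ ℝ with 0 < β₀ < π, the preimage under ρ of the degenerate point (e^{2iβ₀}, 1) ∈ S¹ × S¹ consists of exactly two points, one on the boundary of T₊ and one on the boundary of T₋: {(α,β,γ) ∈ T₊ ∪ T₋ : e^{2iβ} = e^{2iβ₀} and e^{−2iα} = 1} = {(0, β₀, π−β₀), (0, β₀−π, −β₀)}. -/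
open Real

theorem rho_preimage_of_degenerate_point (β₀ : ℝ) (hβ₀ : 0 < β₀) (hβ₀' : β₀ < π) :
    {p : ℝ × ℝ × ℝ | (p ∈ Tplus ∪ Tminus) ∧
        Circle.exp (2 * p.2.1) = Circle.exp (2 * β₀) ∧ Circle.exp (-(2 * p.1)) = 1} =
      {(0, β₀, π - β₀), (0, β₀ - π, -β₀)} := by
  have hπ := Real.pi_pos
  ext ⟨α, β, γ⟩
  simp only [Set.mem_setOf_eq, Set.mem_union, Set.mem_insert_iff, Set.mem_singleton_iff,
    Prod.mk.injEq, Tplus, Tminus]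
  constructor
  · rintro ⟨hmem, hβ, hα⟩
    rw [Circle.exp_eq_exp] at hβ
    rw [Circle.exp_eq_one] at hα
    obtain ⟨m, hm⟩ := hβ
    obtain ⟨n, hn⟩ := hα
    have hαeq : α = (-n : ℝ) * π := by push_cast at hn ⊢; linarith
    have hβeq : β = β₀ + (m : ℝ) * π := by push_cast at hm ⊢; linarith
    rcases hmem with ⟨hsum, h1, h2, h3, h4, h5, h6⟩ | ⟨hsum, h1, h2, h3, h4, h5, h6⟩
    · left
      have hn0 : (0 : ℝ) ≤ (-n : ℝ) := by nlinarith
      have hn1 : (-n : ℝ) ≤ 1 := by nlinarith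
      have hn0' : (0 : ℤ) ≤ -n := by exact_mod_cast hn0
      have hn1' : (-n : ℤ) ≤ 1 := by exact_mod_cast hn1
      have hk : n = 0 ∨ n = -1 := by omega
      rcases hk with h | h
      · subst h
        have hα0 : α = 0 := by rw [hαeq]; push_cast; ring
        have hm0l : (-1 : ℝ) < (m : ℝ) := by nlinarith
        have hm0r : (m : ℝ) < 1 := by nlinarith
        have : (-1 : ℤ) < m := by exact_mod_cast hm0l
        have : m < 1 := by exact_mod_cast hm0r
        have hm0 : m = 0 := by omega
        subst hm0
        have hββ : β = β₀ := by rw [hβeq]; push_cast; ring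
        exact ⟨hα0, hββ, by linarith⟩
      · exfalso
        subst h
        have hαπ : α = π := by rw [hαeq]; push_cast; ring
        have hβ0 : β = 0 := by linarith
        have hm0l : (-1 : ℝ) < (m : ℝ) := by nlinarith
        have hm0r : (m : ℝ) < 1 := by nlinarith
        have h1' : (-1 : ℤ) < m := by exact_mod_cast hm0l
        have h2' : m < 1 := by exact_mod_cast hm0r
        have : m = 0 := by omega
        subst this
        push_cast at hβeq; linarith
    · right
      have hn0 : (-1 : ℝ) ≤ (-n : ℝ) := by nlinarith
      have hn1 : (-n : ℝ) ≤ 0 := by nlinarith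
      have hn0' : (-1 : ℤ) ≤ -n := by exact_mod_cast hn0
      have hn1' : (-n : ℤ) ≤ 0 := by exact_mod_cast hn1
      have hk : n = 0 ∨ n = 1 := by omega
      rcases hk with h | h
      · subst h
        have hα0 : α = 0 := by rw [hαeq]; push_cast; ring
        have hm0l : (-2 : ℝ) < (m : ℝ) := by nlinarith
        have hm0r : (m : ℝ) < 0 := by nlinarith
        have h1' : (-2 : ℤ) < m := by exact_mod_cast hm0l
        have h2' : m < 0 := by exact_mod_cast hm0r
        have hmm : m = -1 := by omega
        subst hmm
        have hββ : β = β₀ - π := by rw [hβeq]; push_cast; ring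
        exact ⟨hα0, hββ, by linarith⟩
      · exfalso
        subst h
        have hαπ : α = -π := by rw [hαeq]; push_cast; ring
        have hβ0 : β = 0 := by linarith
        have hm0l : (-1 : ℝ) < (m : ℝ) := by nlinarith
        have hm0r : (m : ℝ) < 1 := by nlinarith
        have h1' : (-1 : ℤ) < m := by exact_mod_cast hm0l
        have h2' : m < 1 := by exact_mod_cast hm0r
        have : m = 0 := by omega
        subst this
        push_cast at hβeq; linarith
  · rintro (⟨hα0, hββ, hγ⟩ | ⟨hα0, hββ, hγ⟩)
    · subst hα0 hββ hγ
      exact ⟨Or.inl ⟨by ring, le_refl _, le_of_lt hπ, le_of_lt hβ₀, le_of_lt hβ₀',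
        by linarith, by linarith⟩, rfl, by simp⟩
    · subst hα0 hββ hγ
      refine ⟨Or.inr ⟨by ring, by linarith, le_refl _, by linarith, by linarith,
        by linarith, by linarith⟩, ?_, by simp⟩
      rw [Circle.exp_eq_exp]
      exact ⟨-1, by push_cast; ring⟩
end

section
/- Every degenerate point of the torus other than the identity has exactly two preimages under ρ, one in the boundary of T₊ and one in the boundary of T₋: if (w₁,w₂) ∈ S¹ × S¹ satisfies (w₁,w₂) ≠ (1,1) and (w₁ = 1 or w₂ = 1 or w₁ = w₂), then the set {x ∈ T₊ ∪ T₋ : ρ(x) = (w₁,w₂)} has exactly two elements, exactly one of which lies in T₊ and exactly one of which lies in T₋. -/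
open Real

/-- The map `ρ` on interior angles. -/
noncomputable def rho (p : ℝ × ℝ × ℝ) : Circle × Circle :=
  (Circle.exp (2 * p.2.1), Circle.exp (-(2 * p.1)))

lemma extractA (w : Circle) (hw : w ≠ 1) :
    ∃ a : ℝ, 0 < a ∧ a < π ∧ Circle.exp (-(2*a)) = w := by
  have hexp := Circle.exp_arg w
  set θ := Complex.arg (w : ℂ) with hθ
  have hθ1 : -π < θ := Complex.neg_pi_lt_arg _
  have hθ2 : θ ≤ π := Complex.arg_le_pi _
  have hθ0 : θ ≠ 0 := fun h => hw (by rw [← hexp, h, Circle.exp_zero])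
  rcases lt_or_gt_of_ne hθ0 with h | h
  · exact ⟨-θ/2, by linarith, by linarith [pi_pos],
      by rw [show -(2*(-θ/2)) = θ by ring, hexp]⟩
  · refine ⟨π - θ/2, by linarith, by linarith, ?_⟩
    have h2 : Circle.exp (-(2*(π - θ/2))) = Circle.exp θ :=
      Circle.exp_eq_exp.mpr ⟨-1, by push_cast; ring⟩
    rw [h2, hexp]

lemma int_pin {n m : ℤ} (h1 : (m:ℝ) - 1 < (n:ℝ)) (h2 : (n:ℝ) < (m:ℝ) + 1) : n = m := by
  have a : m - 1 < n := by exact_mod_cast h1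
  have b : n < m + 1 := by exact_mod_cast h2
  omega

lemma int_pin2 {n m : ℤ} (h1 : (m:ℝ) - 1 < (n:ℝ)) (h2 : (n:ℝ) < (m:ℝ) + 2) : n = m ∨ n = m + 1 := by
  have a : m - 1 < n := by exact_mod_cast h1
  have b : n < m + 2 := by exact_mod_cast h2
  omega

theorem rho_preimage_of_degenerate_two_points (w₁ w₂ : Circle)
    (hne : (w₁, w₂) ≠ (1, 1)) (hdeg : w₁ = 1 ∨ w₂ = 1 ∨ w₁ = w₂) :
    ∃ x y : ℝ × ℝ × ℝ, x ≠ y ∧ x ∈ Tplus ∧ x ∉ Tminus ∧ y ∈ Tminus ∧ y ∉ Tplus ∧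
      {p : ℝ × ℝ × ℝ | (p ∈ Tplus ∪ Tminus) ∧ rho p = (w₁, w₂)} = {x, y} := by
  have hpi := Real.pi_pos
  by_cases hw1 : w₁ = 1
  · -- Case 1 : w₁ = 1, w₂ ≠ 1
    have hw2 : w₂ ≠ 1 := fun h => hne (by rw [hw1, h])
    obtain ⟨a, ha0, haπ, hea⟩ := extractA w₂ hw2
    refine ⟨(a, 0, π - a), (a - π, 0, -a), ?_, ?_, ?_, ?_, ?_, ?_⟩
    · simp only [ne_eq, Prod.mk.injEq, not_and]; intro h; linarith
    · exact ⟨by simp only; ring, le_of_lt ha0, le_of_lt haπ, le_refl 0, hpi.le,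
        by simp only; linarith, by simp only; linarith⟩
    · intro h; obtain ⟨_, _, h2, _⟩ := h; simp only at h2; linarith
    · exact ⟨by simp only; ring, by simp only; linarith, by simp only; linarith,
        by simp only [neg_nonpos]; linarith, le_refl 0,
        by simp only; linarith, by simp only; linarith⟩
    · intro h; obtain ⟨_, h1, _⟩ := h; simp only at h1; linarith
    · ext ⟨pa, pb, pc⟩
      simp only [Set.mem_setOf_eq, Set.mem_union, Set.mem_insert_iff,
        Set.mem_singleton_iff, Tplus, Tminus, rho, Prod.mk.injEq]
      constructor
      · rintro ⟨hT, h1, h2⟩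
        rw [hw1, ← Circle.exp_zero] at h1
        obtain ⟨m, hm⟩ := Circle.exp_eq_exp.mp h1
        rw [← hea] at h2
        obtain ⟨n, hn⟩ := Circle.exp_eq_exp.mp h2
        rcases hT with ⟨hsum, hα0, hαπ, hβ0, hβπ, hγ0, hγπ⟩ |
          ⟨hsum, hα0, hαπ, hβ0, hβπ, hγ0, hγπ⟩
        · have hn0 : n = 0 := int_pin (by push_cast; nlinarith) (by push_cast; nlinarith)
          rw [hn0] at hn; push_cast at hn
          have hpa : pa = a := by linarith
          have hm' : m = 0 ∨ m = 1 := int_pin2 (by push_cast; nlinarith) (by push_cast; nlinarith)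
          rcases hm' with hm0 | hm1
          · rw [hm0] at hm; push_cast at hm
            exact Or.inl ⟨hpa, by linarith, by linarith⟩
          · rw [hm1] at hm; push_cast at hm
            exact absurd hγ0 (by push_neg; linarith)
        · have hn1 : n = 1 := int_pin (by push_cast; nlinarith) (by push_cast; nlinarith)
          rw [hn1] at hn; push_cast at hn
          have hpa : pa = a - π := by linarith
          have hm' : m = -1 ∨ m = 0 := by
            have := int_pin2 (n := m) (m := -1) (by push_cast; nlinarith) (by push_cast; nlinarith)
            omega
          rcases hm' with hm0 | hm1
          · rw [hm0] at hm; push_cast at hm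
            exact absurd hγπ (by push_neg; linarith)
          · rw [hm1] at hm; push_cast at hm
            exact Or.inr ⟨hpa, by linarith, by linarith⟩
      · rintro (⟨rfl, rfl, rfl⟩ | ⟨rfl, rfl, rfl⟩)
        · refine ⟨Or.inl ⟨by ring, le_of_lt ha0, le_of_lt haπ, le_refl 0, hpi.le,
            by linarith, by linarith⟩, ?_, ?_⟩
          · rw [hw1, mul_zero, Circle.exp_zero]
          · exact hea
        · refine ⟨Or.inr ⟨by ring, by linarith, by linarith, by simp; linarith, le_refl 0,
            by linarith, by linarith⟩, ?_, ?_⟩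
          · rw [hw1, mul_zero, Circle.exp_zero]
          · calc Circle.exp (-(2 * (a - π))) = Circle.exp (-(2*a)) :=
                Circle.exp_eq_exp.mpr ⟨1, by push_cast; ring⟩
              _ = w₂ := hea
  · have hw2 : w₂ = 1 ∨ w₁ = w₂ := by tauto
    by_cases hw2' : w₂ = 1
    · -- Case 2 : w₂ = 1, w₁ ≠ 1
      obtain ⟨a, ha0, haπ, hea⟩ := extractA w₁ hw1
      have heb : Circle.exp (2 * (π - a)) = w₁ := by
        calc Circle.exp (2 * (π - a)) = Circle.exp (-(2*a)) :=
            Circle.exp_eq_exp.mpr ⟨1, by push_cast; ring⟩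
          _ = w₁ := hea
      set b : ℝ := π - a with hbdef
      have hb0 : 0 < b := by simp only [hbdef]; linarith
      have hbπ : b < π := by simp only [hbdef]; linarith
      clear_value b
      refine ⟨(0, b, π - b), (0, b - π, -b), ?_, ?_, ?_, ?_, ?_, ?_⟩
      · simp only [ne_eq, Prod.mk.injEq, not_and]; intro _ h; linarith
      · exact ⟨by simp only; ring, le_refl 0, hpi.le, by simp only; linarith,
          by simp only; linarith, by simp only; linarith, by simp only; linarith⟩
      · intro h; obtain ⟨_, _, _, _, h2, _⟩ := h; simp only at h2; linarith
      · exact ⟨by simp only; ring, by simp only; linarith, le_refl 0,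
          by simp only; linarith, by simp only; linarith,
          by simp only; linarith, by simp only; linarith⟩
      · intro h; obtain ⟨_, _, _, h1, _⟩ := h; simp only at h1; linarith
      · ext ⟨pa, pb, pc⟩
        simp only [Set.mem_setOf_eq, Set.mem_union, Set.mem_insert_iff,
          Set.mem_singleton_iff, Tplus, Tminus, rho, Prod.mk.injEq]
        constructor
        · rintro ⟨hT, h1, h2⟩
          rw [← heb] at h1
          obtain ⟨m, hm⟩ := Circle.exp_eq_exp.mp h1
          rw [hw2', ← Circle.exp_zero] at h2
          obtain ⟨n, hn⟩ := Circle.exp_eq_exp.mp h2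
          rcases hT with ⟨hsum, hα0, hαπ, hβ0, hβπ, hγ0, hγπ⟩ |
            ⟨hsum, hα0, hαπ, hβ0, hβπ, hγ0, hγπ⟩
          · have hm0 : m = 0 := int_pin (by push_cast; nlinarith) (by push_cast; nlinarith)
            rw [hm0] at hm; push_cast at hm
            have hpb : pb = b := by linarith
            have hn' : n = -1 ∨ n = 0 := by
              have := int_pin2 (n := n) (m := -1) (by push_cast; nlinarith) (by push_cast; nlinarith)
              omega
            rcases hn' with hn0 | hn1
            · rw [hn0] at hn; push_cast at hn
              exact absurd hγ0 (by push_neg; linarith)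
            · rw [hn1] at hn; push_cast at hn
              exact Or.inl ⟨by linarith, hpb, by linarith⟩
          · have hm0 : m = -1 := by
              have := int_pin (n := m) (m := -1) (by push_cast; nlinarith) (by push_cast; nlinarith)
              omega
            rw [hm0] at hm; push_cast at hm
            have hpb : pb = b - π := by linarith
            have hn' : n = 0 ∨ n = 1 := int_pin2 (by push_cast; nlinarith) (by push_cast; nlinarith)
            rcases hn' with hn0 | hn1
            · rw [hn0] at hn; push_cast at hn
              exact Or.inr ⟨by linarith, hpb, by linarith⟩
            · rw [hn1] at hn; push_cast at hn
              exact absurd hγ0 (by push_neg; linarith)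
        · rintro (⟨rfl, rfl, rfl⟩ | ⟨rfl, rfl, rfl⟩)
          · refine ⟨Or.inl ⟨by ring, le_refl 0, hpi.le, by linarith, by linarith,
              by linarith, by linarith⟩, heb, ?_⟩
            rw [hw2']; norm_num
          · refine ⟨Or.inr ⟨by ring, by linarith, le_refl 0, by linarith, by linarith,
              by linarith, by linarith⟩, ?_, ?_⟩
            · calc Circle.exp (2 * (b - π)) = Circle.exp (2 * b) :=
                  Circle.exp_eq_exp.mpr ⟨-1, by push_cast; ring⟩
                _ = w₁ := heb
            · rw [hw2']; norm_num
    · -- Case 3 : w₁ = w₂, neither 1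
      have hw12 : w₁ = w₂ := by tauto
      obtain ⟨a, ha0, haπ, hea⟩ := extractA w₂ hw2'
      have heb : Circle.exp (2 * (π - a)) = w₁ := by
        calc Circle.exp (2 * (π - a)) = Circle.exp (-(2*a)) :=
            Circle.exp_eq_exp.mpr ⟨1, by push_cast; ring⟩
          _ = w₂ := hea
          _ = w₁ := hw12.symm
      refine ⟨(a, π - a, 0), (a - π, -a, 0), ?_, ?_, ?_, ?_, ?_, ?_⟩
      · simp only [ne_eq, Prod.mk.injEq, not_and]; intro h; linarith
      · exact ⟨by simp only; ring, ha0.le, haπ.le, by simp only; linarith,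
          by simp only; linarith, le_refl 0, hpi.le⟩
      · intro h; obtain ⟨_, _, h2, _⟩ := h; simp only at h2; linarith
      · exact ⟨by simp only; ring, by simp only; linarith, by simp only; linarith,
          by simp only; linarith, by simp only; linarith, by simp only; linarith, le_refl 0⟩
      · intro h; obtain ⟨_, h1, _⟩ := h; simp only at h1; linarith
      · ext ⟨pa, pb, pc⟩
        simp only [Set.mem_setOf_eq, Set.mem_union, Set.mem_insert_iff,
          Set.mem_singleton_iff, Tplus, Tminus, rho, Prod.mk.injEq]
        constructor
        · rintro ⟨hT, h1, h2⟩
          rw [← heb] at h1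
          obtain ⟨m, hm⟩ := Circle.exp_eq_exp.mp h1
          rw [← hea] at h2
          obtain ⟨n, hn⟩ := Circle.exp_eq_exp.mp h2
          rcases hT with ⟨hsum, hα0, hαπ, hβ0, hβπ, hγ0, hγπ⟩ |
            ⟨hsum, hα0, hαπ, hβ0, hβπ, hγ0, hγπ⟩
          · have hn0 : n = 0 := int_pin (by push_cast; nlinarith) (by push_cast; nlinarith)
            rw [hn0] at hn; push_cast at hn
            have hm0 : m = 0 := int_pin (by push_cast; nlinarith) (by push_cast; nlinarith)
            rw [hm0] at hm; push_cast at hm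
            exact Or.inl ⟨by linarith, by linarith, by linarith⟩
          · have hn1 : n = 1 := int_pin (by push_cast; nlinarith) (by push_cast; nlinarith)
            rw [hn1] at hn; push_cast at hn
            have hm0 : m = -1 := by
              have := int_pin (n := m) (m := -1) (by push_cast; nlinarith) (by push_cast; nlinarith)
              omega
            rw [hm0] at hm; push_cast at hm
            exact Or.inr ⟨by linarith, by linarith, by linarith⟩
        · rintro (⟨rfl, rfl, rfl⟩ | ⟨rfl, rfl, rfl⟩)
          · exact ⟨Or.inl ⟨by ring, ha0.le, haπ.le, by linarith, by linarith,
              le_refl 0, hpi.le⟩, heb, hea⟩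
          · refine ⟨Or.inr ⟨by ring, by linarith, by linarith, by linarith, by linarith,
              by linarith, le_refl 0⟩, ?_, ?_⟩
            · calc Circle.exp (2 * -a) = Circle.exp (-(2*a)) := by ring_nf
                _ = w₂ := hea
                _ = w₁ := hw12.symm
            · calc Circle.exp (-(2 * (a - π))) = Circle.exp (-(2*a)) :=
                  Circle.exp_eq_exp.mpr ⟨1, by push_cast; ring⟩
                _ = w₂ := hea
end

section
/- A nondegenerate nonequilateral isosceles class has multiplicity 2: for any ξ ∈ ℝ with 2ξ ∉ 2πℤ and 3ξ ∉ 2πℤ, the set of matrices M ∈ G such that M·(ξ, −ξ) − (ξ, −ξ) ∈ (2πℤ)² is exactly {[[1,0],[0,1]], [[0,−1],[−1,0]]}, of cardinality 2. -/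
open Real

/-- The image of the two-dimensional permutation representation of `±S₃ ≅ D₆`
acting on the plane of relative arguments. -/
def Gmats : Set (Matrix (Fin 2) (Fin 2) ℝ) :=
  {!![1,0;0,1], -!![1,0;0,1], !![-1,1;-1,0], -!![-1,1;-1,0], !![0,-1;1,-1], -!![0,-1;1,-1],
   !![0,1;1,0], -!![0,1;1,0], !![-1,0;-1,1], -!![-1,0;-1,1], !![1,-1;0,-1], -!![1,-1;0,-1]}

theorem nondegenerate_isosceles_multiplicity_two (ξ : ℝ)
    (h2 : ∀ n : ℤ, 2 * ξ ≠ n * (2 * π)) (h3 : ∀ n : ℤ, 3 * ξ ≠ n * (2 * π)) :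
    ({M : Matrix (Fin 2) (Fin 2) ℝ | M ∈ Gmats ∧
        ∃ k l : ℤ, M.mulVec ![ξ, -ξ] - ![ξ, -ξ] = ![2 * π * k, 2 * π * l]} =
      {!![1,0;0,1], !![0,-1;-1,0]}) ∧
    ({M : Matrix (Fin 2) (Fin 2) ℝ | M ∈ Gmats ∧
        ∃ k l : ℤ, M.mulVec ![ξ, -ξ] - ![ξ, -ξ] = ![2 * π * k, 2 * π * l]}.ncard = 2) := by
  have hset : ({M : Matrix (Fin 2) (Fin 2) ℝ | M ∈ Gmats ∧
        ∃ k l : ℤ, M.mulVec ![ξ, -ξ] - ![ξ, -ξ] = ![2 * π * k, 2 * π * l]} =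
      {!![1,0;0,1], !![0,-1;-1,0]}) := by
    ext M
    simp only [Set.mem_setOf_eq, Gmats, Set.mem_insert_iff, Set.mem_singleton_iff]
    constructor
    · rintro ⟨hG, k, l, heq⟩
      rcases hG with rfl|rfl|rfl|rfl|rfl|rfl|rfl|rfl|rfl|rfl|rfl|rfl <;>
        simp only [funext_iff, Fin.forall_fin_two, Matrix.mulVec, dotProduct,
          Fin.sum_univ_two, Pi.sub_apply, Matrix.cons_val_zero, Matrix.cons_val_one,
          Matrix.head_cons, Matrix.neg_apply, Matrix.cons_val', Matrix.empty_val',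
          Matrix.cons_val_fin_one, Matrix.head_fin_const, Matrix.of_apply] at heq <;>
        norm_num at heq
      · left; rfl
      · exact absurd (by push_cast; linarith [heq.1]) (h2 (-k))
      · exact absurd (by push_cast; linarith [heq.1]) (h3 (-k))
      · exact absurd (by push_cast; linarith [heq.2]) (h2 l)
      · exact absurd (by push_cast; linarith [heq.2]) (h3 l)
      · exact absurd (by push_cast; linarith [heq.1]) (h2 (-k))
      · exact absurd (by push_cast; linarith [heq.1]) (h2 (-k))
      · right; ext i j; fin_cases i <;> fin_cases j <;> simp
      · exact absurd (by push_cast; linarith [heq.1]) (h2 (-k))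
      · exact absurd (by push_cast; linarith [heq.2]) (h3 l)
      · exact absurd (by push_cast; linarith [heq.2]) (h2 l)
      · exact absurd (by push_cast; linarith [heq.1]) (h3 (-k))
    · rintro (rfl|rfl) <;>
        refine ⟨by simp [Gmats], 0, 0, ?_⟩ <;>
        · funext i
          fin_cases i <;>
            simp [Matrix.mulVec, dotProduct, Fin.sum_univ_two]
  refine ⟨hset, ?_⟩
  rw [hset]
  refine Set.ncard_pair ?_
  intro h
  have := congrFun (congrFun h 0) 0
  norm_num at this
end
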